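/- Fix n ≥ 1 and set θ_k := (n−2k)π/2 for k = 0,…,n. Let θ ∈ [θ_n, θ_0] with θ ≠ θ_k for all k ∈ {0,…,n}, let τ > 0, and let (X_j)_{j∈ℕ} be a sequence of real symmetric n×n matrices with F(X_j) → θ. Then liminf_{j→∞} F(X_j + τI) > θ. -/

import Mathlib

open Real Filter Topology

open scoped Classical in
noncomputable def slF {n : ℕ} (X : Matrix (Fin n) (Fin n) ℝ) : ℝ :=
  if hX : X.IsHermitian then ∑ i, Real.arctan (hX.eigenvalues i) else 0

noncomputable def hess {n : ℕ} (φ : EuclideanSpace ℝ (Fin n) → ℝ)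
    (x : EuclideanSpace ℝ (Fin n)) : Matrix (Fin n) (Fin n) ℝ :=
  fun i j => iteratedFDeriv ℝ 2 φ x ![EuclideanSpace.single i 1, EuclideanSpace.single j 1]

def IsSubsolution {n : ℕ} (Ω : Set (EuclideanSpace ℝ (Fin n)))
    (v f : EuclideanSpace ℝ (Fin n) → ℝ) : Prop :=
  ∀ x ∈ Ω, ∀ φ : EuclideanSpace ℝ (Fin n) → ℝ,
    ContDiffAt ℝ 2 φ x → (∀ᶠ y in 𝓝 x, v y ≤ φ y) → φ x = v x → f x ≤ slF (hess φ x)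

def IsSupersolution {n : ℕ} (Ω : Set (EuclideanSpace ℝ (Fin n)))
    (u f : EuclideanSpace ℝ (Fin n) → ℝ) : Prop :=
  ∀ x ∈ Ω, ∀ ψ : EuclideanSpace ℝ (Fin n) → ℝ,
    ContDiffAt ℝ 2 ψ x → (∀ᶠ y in 𝓝 x, ψ y ≤ u y) → ψ x = u x → slF (hess ψ x) ≤ f x

noncomputable def vFun (n k : ℕ) (x : EuclideanSpace ℝ (Fin n)) : ℝ :=
  1/4 - ∑ i ∈ Finset.univ.filter (fun i : Fin n => (i : ℕ) < k), |x i|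
      + ∑ i ∈ Finset.univ.filter (fun i : Fin n => k ≤ (i : ℕ)), (1/2) * |x i| ^ ((3:ℝ)/2)

noncomputable def phaseTerm (t : ℝ) : ℝ :=
  if t = 0 then π / 2 else Real.arctan ((3/8) * |t| ^ (-(1:ℝ)/2))

noncomputable def fFun (n k : ℕ) (x : EuclideanSpace ℝ (Fin n)) : ℝ :=
  - ∑ i ∈ Finset.univ.filter (fun i : Fin n => (i : ℕ) < k), phaseTerm (x i)
  + ∑ i ∈ Finset.univ.filter (fun i : Fin n => k ≤ (i : ℕ)), phaseTerm (x i)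

def revVec {n : ℕ} (x : EuclideanSpace ℝ (Fin n)) : EuclideanSpace ℝ (Fin n) :=
  WithLp.toLp 2 (fun i : Fin n => x i.rev)

noncomputable def uFun (n k : ℕ) (x : EuclideanSpace ℝ (Fin n)) : ℝ :=
  - vFun n (n - k) (revVec x)

def exch (n : ℕ) : Matrix (Fin n) (Fin n) ℝ :=
  fun i j => if j = i.rev then 1 else 0

/-!
If every eigenvalue of `X` has modulus at least `R`, each `arctan λ` lies within
`π / 2 - arctan R` of `±π / 2`, so `F(X)` lies within `n (π / 2 - arctan R)` of one of the
special phases `θ_k`. As `θ` keeps a positive distance from all `θ_k`, for `R` large and `j`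
large the matrix `X_j` must have an eigenvalue in `[-R, R]`. Shifting that eigenvalue by `τ`
raises `F` by at least `min_{|x| ≤ R} (arctan (x + τ) - arctan x) > 0`, and no other term
decreases.
-/

section CFC

variable {R A : Type*} {p : A → Prop} [CommRing R] [StarRing R] [MetricSpace R]
  [IsTopologicalRing R] [ContinuousStar R] [TopologicalSpace A] [Ring A] [StarRing A]
  [Algebra R A] [ContinuousFunctionalCalculus R A p] [ContinuousMap.UniqueHom R A]

lemma cfc_comp_add_const (r : R) (f : R → R) (a : A)
    (hf : ContinuousOn f ((· + r) '' spectrum R a) := by cfc_cont_tac)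
    (ha : p a := by cfc_tac) :
    cfc (f <| · + r) a = cfc f (a + algebraMap R A r) := by
  rw [cfc_comp' .., cfc_add_const .., cfc_id' ..]

end CFC

lemma Matrix.IsHermitian.trace_cfc {n : Type*} [Fintype n] [DecidableEq n]
    {A : Matrix n n ℝ} (hA : A.IsHermitian) (f : ℝ → ℝ) :
    (cfc f A).trace = ∑ i, f (hA.eigenvalues i) := by
  rw [hA.cfc_eq, Matrix.IsHermitian.cfc, Unitary.conjStarAlgAut_apply, Matrix.trace_mul_cycle,
    Unitary.star_mul_self_of_mem (SetLike.coe_mem _), Matrix.one_mul, Matrix.trace_diagonal]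
  simp

lemma slF_of_isHermitian {n : ℕ} {A : Matrix (Fin n) (Fin n) ℝ} (hA : A.IsHermitian) :
    slF A = ∑ i, arctan (hA.eigenvalues i) := by
  rw [slF, dif_pos hA]

lemma slF_add_smul_one {n : ℕ} {A : Matrix (Fin n) (Fin n) ℝ} (hA : A.IsHermitian) (τ : ℝ) :
    slF (A + τ • 1) = ∑ i, arctan (hA.eigenvalues i + τ) := by
  have hA' : (A + τ • (1 : Matrix (Fin n) (Fin n) ℝ)).IsHermitian :=
    hA.add (Matrix.isHermitian_one.smul (IsSelfAdjoint.all τ))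
  rw [slF_of_isHermitian hA', ← hA'.trace_cfc, ← Algebra.algebraMap_eq_smul_one,
    ← cfc_comp_add_const τ arctan A, hA.trace_cfc]

lemma slF_le {n : ℕ} (A : Matrix (Fin n) (Fin n) ℝ) : slF A ≤ n * (π / 2) := by
  unfold slF
  split
  · calc _ ≤ ∑ _ : Fin n, π / 2 := Finset.sum_le_sum fun _ _ => (arctan_lt_pi_div_two _).le
      _ = _ := by simp
  · positivity

lemma abs_arctan_sub_le_of_le_abs {x R : ℝ} (h : R ≤ |x|) :
    |arctan x - (if x < 0 then -(π / 2) else π / 2)| ≤ π / 2 - arctan R := by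
  have hR : arctan R ≤ arctan |x| := arctan_strictMono.monotone h
  split_ifs with hx
  · rw [abs_of_neg hx, arctan_neg] at hR
    rw [abs_of_nonneg (by linarith [neg_pi_div_two_lt_arctan x])]
    linarith
  · rw [abs_of_nonneg (not_lt.1 hx)] at hR
    rw [abs_of_nonpos (by linarith [arctan_lt_pi_div_two x])]
    linarith

open Finset in
lemma exists_abs_sum_arctan_sub_le {ι : Type*} [Fintype ι] (d : ι → ℝ) {R : ℝ}
    (h : ∀ i, R ≤ |d i|) :
    ∃ m ≤ Fintype.card ι, |∑ i, arctan (d i) - (Fintype.card ι - 2 * m : ℝ) * (π / 2)| ≤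
      Fintype.card ι * (π / 2 - arctan R) := by
  classical
  set s : ι → ℝ := fun i => if d i < 0 then -(π / 2) else π / 2
  refine ⟨#{i | d i < 0}, card_le_univ _, ?_⟩
  have hs : ∑ i, s i = (Fintype.card ι - 2 * #{i | d i < 0} : ℝ) * (π / 2) := by
    have : ∀ i, s i = π / 2 - (if d i < 0 then 1 else 0) * π := fun i => by
      simp only [s]; split_ifs <;> ring
    simp only [this, sum_sub_distrib, ← sum_mul, sum_boole, sum_const, card_univ, nsmul_eq_mul]
    ring
  calc |∑ i, arctan (d i) - _| = |∑ i, (arctan (d i) - s i)| := by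
        rw [sum_sub_distrib, hs]
    _ ≤ ∑ i, |arctan (d i) - s i| := abs_sum_le_sum_abs _ _
    _ ≤ ∑ _ : ι, (π / 2 - arctan R) :=
        sum_le_sum fun i _ => abs_arctan_sub_le_of_le_abs (h i)
    _ = _ := by simp [mul_sub]

lemma exists_pos_le_arctan_add_sub_arctan (R : ℝ) {τ : ℝ} (hτ : 0 < τ) :
    ∃ c > 0, ∀ x, |x| ≤ R → c ≤ arctan (x + τ) - arctan x := by
  obtain ⟨c, hc, hcR⟩ := (isCompact_Icc (a := -R) (b := R)).exists_forall_le'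
    (f := fun x => arctan (x + τ) - arctan x) (by fun_prop) (a := 0)
    fun x _ => sub_pos.2 (arctan_strictMono (by linarith))
  exact ⟨c, hc, fun x hx => hcR x (abs_le.1 hx)⟩

lemma Matrix.IsHermitian.exists_abs_eigenvalues_le {n : ℕ} {A : Matrix (Fin n) (Fin n) ℝ}
    (hA : A.IsHermitian) {R : ℝ}
    (h : ∀ m ≤ n, n * (π / 2 - arctan R) < |slF A - (n - 2 * m) * (π / 2)|) :
    ∃ i, |hA.eigenvalues i| ≤ R := by
  by_contra! hlarge
  obtain ⟨m, hm, hclose⟩ := exists_abs_sum_arctan_sub_le hA.eigenvalues fun i => (hlarge i).le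
  rw [Fintype.card_fin] at hm hclose
  exact (h m hm).not_ge (by rwa [slF_of_isHermitian hA])

lemma slF_add_arctan_sub_le_slF_add_smul_one {n : ℕ} {A : Matrix (Fin n) (Fin n) ℝ}
    (hA : A.IsHermitian) {τ : ℝ} (hτ : 0 ≤ τ) (i : Fin n) :
    slF A + (arctan (hA.eigenvalues i + τ) - arctan (hA.eigenvalues i)) ≤ slF (A + τ • 1) := by
  rw [slF_of_isHermitian hA, slF_add_smul_one hA, ← le_sub_iff_add_le',
    ← Finset.sum_sub_distrib]
  exact Finset.single_le_sum
    (f := fun i => arctan (hA.eigenvalues i + τ) - arctan (hA.eigenvalues i))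
    (fun _ _ => sub_nonneg.2 (arctan_strictMono.monotone (by linarith))) (Finset.mem_univ i)

theorem stmt17_general (n : ℕ) (θ : ℝ)
    (hθk : ∀ k ≤ n, θ ≠ ((n : ℝ) - 2 * k) * (π / 2))
    (τ : ℝ) (hτ : 0 < τ)
    (X : ℕ → Matrix (Fin n) (Fin n) ℝ) (hX : ∀ j, (X j).IsHermitian)
    (h1 : Tendsto (fun j => slF (X j)) atTop (𝓝 θ)) :
    θ < Filter.liminf (fun j => slF (X j + τ • (1 : Matrix (Fin n) (Fin n) ℝ))) atTop := by
  obtain ⟨ε, hε, hball⟩ : ∃ ε > 0,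
      Metric.ball θ ε ⊆ ((fun k : ℕ => ((n : ℝ) - 2 * k) * (π / 2)) '' Set.Iic n)ᶜ :=
    Metric.isOpen_iff.1 ((Set.finite_Iic n).image _).isClosed.isOpen_compl θ
      fun ⟨k, hk, hθ⟩ => hθk k hk hθ.symm
  obtain ⟨R, hR⟩ : ∃ R, n * (π / 2 - arctan R) < ε / 2 := by
    have := ((tendsto_arctan_atTop.mono_right nhdsWithin_le_nhds).const_sub (π / 2)).const_mul
      (n : ℝ)
    rw [sub_self, mul_zero] at this
    exact (this.eventually (gt_mem_nhds (half_pos hε))).exists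
  obtain ⟨c, hc, hcR⟩ := exists_pos_le_arctan_add_sub_arctan R hτ
  have hshift : ∀ᶠ j in atTop, θ + c / 2 ≤ slF (X j + τ • 1) := by
    filter_upwards [Metric.tendsto_nhds.1 h1 _ (lt_min (half_pos hε) (half_pos hc))] with j hj
    rw [Real.dist_eq] at hj
    obtain ⟨i, hi⟩ := (hX j).exists_abs_eigenvalues_le (R := R) fun m hm => by
      by_contra! hm'
      refine hball ?_ ⟨m, hm, rfl⟩
      calc dist (((n : ℝ) - 2 * m) * (π / 2)) θ
          ≤ dist (slF (X j)) (((n : ℝ) - 2 * m) * (π / 2)) + dist (slF (X j)) θ :=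
            dist_triangle_left _ _ _
        _ < ε := by rw [Real.dist_eq, Real.dist_eq]; linarith [min_le_left (ε / 2) (c / 2)]
    linarith [hcR _ hi, slF_add_arctan_sub_le_slF_add_smul_one (hX j) hτ.le i,
      min_le_right (ε / 2) (c / 2), (abs_lt.1 hj).1]
  exact (lt_add_of_pos_right θ (half_pos hc)).trans_le
    (le_liminf_of_le (isCoboundedUnder_ge_of_le _ fun _ => slF_le _) hshift)

theorem stmt17 (n : ℕ) (hn : 1 ≤ n) (θ : ℝ)
    (hθ1 : -((n : ℝ) * (π / 2)) ≤ θ) (hθ2 : θ ≤ (n : ℝ) * (π / 2))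
    (hθk : ∀ k ≤ n, θ ≠ ((n : ℝ) - 2 * k) * (π / 2))
    (τ : ℝ) (hτ : 0 < τ)
    (X : ℕ → Matrix (Fin n) (Fin n) ℝ) (hX : ∀ j, (X j).IsHermitian)
    (h1 : Tendsto (fun j => slF (X j)) atTop (𝓝 θ)) :
    θ < Filter.liminf (fun j => slF (X j + τ • (1 : Matrix (Fin n) (Fin n) ℝ))) atTop :=
  stmt17_general n θ hθk τ hτ X hX h1
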